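/- arXiv:math/0011065 — 3 statements merged into one kernel-verified Lean document; each statement's English description precedes it below -/
import Mathlib

section
/- For p = n (and hence q = 0), system (★) has exactly one solution, namely i_j = n+1−j and ℓ_j = 1 for all 1 ≤ j ≤ n; this solution gives the primitive component 1 ⊗ d_(1,1)⋯d_(n,1) of the diagonal Δ(T_{n+2}). -/
/-- A *solution of system (★)* from the Saneblidze–Umble diagonal on the
associahedron `K_{n+2}`, bundled together with all the derived data
(`ε`, the partial sums `L`, `L'`, and the auxiliary index functions `o`, `o'`, `t`)
and the conventions and conditions governing them. -/
structure StarSystem where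
  n : ℕ
  p : ℕ
  q : ℕ
  i : ℕ → ℤ
  l : ℕ → ℤ
  i' : ℕ → ℤ
  l' : ℕ → ℤ
  eps : ℕ → ℤ
  L : ℕ → ℤ
  L' : ℕ → ℤ
  o : ℕ → ℕ
  o' : ℕ → ℕ
  t : ℕ → ℕ
  /-- `n ≥ 1`. -/
  hn : 1 ≤ n
  /-- `p + q = n`. -/
  hpq : p + q = n
  /-- Convention `i₀ = n + 1`. -/
  hi0 : i 0 = (n : ℤ) + 1
  /-- Convention `i_{p+1} = 0`. -/
  hip : i (p + 1) = 0
  /-- Convention `i'₀ = n + 1`. -/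
  hi'0 : i' 0 = (n : ℤ) + 1
  /-- Convention `i'_{q+1} = 0`. -/
  hi'q : i' (q + 1) = 0
  /-- Convention `ε₀ = 0`. -/
  heps0 : eps 0 = 0
  /-- Convention `ε_{q+1} = n + 1`. -/
  hepsq : eps (q + 1) = (n : ℤ) + 1
  /-- Convention `ℓ₀ = 0`. -/
  hl0 : l 0 = 0
  /-- Convention `ℓ'₀ = 0`. -/
  hl'0 : l' 0 = 0
  /-- `ℓ₍₀₎ = 0`. -/
  hL0 : L 0 = 0
  /-- `ℓ₍ᵤ₎ = ℓ₁ + ⋯ + ℓᵤ`. -/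
  hLrec : ∀ u, 1 ≤ u → u ≤ p → L u = L (u - 1) + l u
  /-- Convention `ℓ₍ₚ₊₁₎ = n + 1`. -/
  hLp : L (p + 1) = (n : ℤ) + 1
  /-- `ℓ'₍₀₎ = 0`. -/
  hL'0 : L' 0 = 0
  /-- `ℓ'₍ᵤ₎ = ℓ'₁ + ⋯ + ℓ'ᵤ`. -/
  hL'rec : ∀ u, 1 ≤ u → u ≤ q → L' u = L' (u - 1) + l' u
  /-- Convention `ℓ'₍q₊₁₎ = n + 1`. -/
  hL'q : L' (q + 1) = (n : ℤ) + 1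
  /-- `ε₁ < ⋯ < ε_q`. -/
  hepsMono : ∀ u v, 1 ≤ u → u < v → v ≤ q → eps u < eps v
  /-- Each `εᵤ` lies in `{1, …, n}`. -/
  hepsRange : ∀ u, 1 ≤ u → u ≤ q → 1 ≤ eps u ∧ eps u ≤ (n : ℤ)
  /-- `ε₁ < ⋯ < ε_q` enumerates the complement of `{i₁, …, i_p}`. -/
  hepsCompl : ∀ u j, 1 ≤ u → u ≤ q → 1 ≤ j → j ≤ p → eps u ≠ i j
  /-- Condition (1): `1 ≤ i_j < i_{j-1} ≤ n + 1`. -/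
  hcond1 : ∀ j, 1 ≤ j → j ≤ p → 1 ≤ i j ∧ i j < i (j - 1)
  /-- Condition (2): `1 ≤ ℓ_j ≤ n + 1 - i_j - ℓ₍ⱼ₋₁₎`. -/
  hcond2 : ∀ j, 1 ≤ j → j ≤ p → 1 ≤ l j ∧ l j ≤ (n : ℤ) + 1 - i j - L (j - 1)
  /-- Condition (3): `0 ≤ i'_k ≤ min_{o'(t_k) < r < k} {i'_r, i_{t_k} - ℓ'₍ₒ'₍ₜ_k₎₎}`
  (a minimum over an empty collection imposes no upper bound). -/
  hcond3 : ∀ k, 1 ≤ k → k ≤ q → 0 ≤ i' k ∧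
      ∀ r, o' (t k) < r → r < k → i' k ≤ i' r ∧ i' k ≤ i (t k) - L' (o' (t k))
  /-- Condition (4): `ℓ'_k = ε_k - i'_k - ℓ'₍ₖ₋₁₎` with `ℓ'_k ≥ 1`. -/
  hcond4 : ∀ k, 1 ≤ k → k ≤ q → l' k = eps k - i' k - L' (k - 1) ∧ 1 ≤ l' k
  /-- `o(u) = max { r : i_r ≥ ε_u }`. -/
  ho : ∀ u, u ≤ q + 1 →
      o u ≤ p + 1 ∧ eps u ≤ i (o u) ∧ ∀ r, r ≤ p + 1 → eps u ≤ i r → r ≤ o u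
  /-- `o'(u) = max { r : ε_r ≤ i_u }`. -/
  ho' : ∀ u, u ≤ p + 1 →
      o' u ≤ q + 1 ∧ eps (o' u) ≤ i u ∧ ∀ r, r ≤ q + 1 → eps r ≤ i u → r ≤ o' u
  /-- `t_u = min { r : i_r + ℓ₍ᵣ₎ - ℓ₍ₒ₍ᵤ₎₎ > ε_u > i_r }`. -/
  ht : ∀ u, 1 ≤ u → u ≤ q →
      t u ≤ p + 1 ∧ (eps u < i (t u) + L (t u) - L (o u) ∧ i (t u) < eps u) ∧
      ∀ r, r < t u → ¬(eps u < i r + L r - L (o u) ∧ i r < eps u)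

namespace StarSystem

/-- The auxiliary sequence of the selection algorithm:
`kseq 0 = k₁ = k - 1` and `kseq (j+1) = k_{j+2} = o'(t_{k_{j+1}})`. -/
def kseq (S : StarSystem) (k : ℕ) : ℕ → ℕ
  | 0 => k - 1
  | j + 1 => S.o' (S.t (S.kseq k j))

/-- Stage-`j` test "`i'_{k_j} < i'_k + m`" of the selection algorithm. -/
def selA (S : StarSystem) (k : ℕ) (m : ℤ) (j : ℕ) : Prop :=
  S.i' (S.kseq k j) < S.i' k + m

/-- Stage-`j` test "`i_{t_{k_j}} - ℓ'₍ₖ_{j+1}₎ = i'_k + m`" of the selection algorithm. -/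
def selB (S : StarSystem) (k : ℕ) (m : ℤ) (j : ℕ) : Prop :=
  S.i (S.t (S.kseq k j)) - S.L' (S.kseq k (j + 1)) = S.i' k + m

/-- `z` is the output of the selection algorithm for the data `(k, m)`:
if `k = 1` then `z = p + 1 - i'₁ - m`; if `k > 1` then at the first stage `j` at which
one of the two tests holds, `z = t_{k_j}` if the second test holds, and otherwise `z`
is the index with `i_z = ε_{k_j} - i'_{k_j} + i'_k + m`. -/
def SelAlg (S : StarSystem) (k : ℕ) (m : ℤ) (z : ℕ) : Prop :=
  if k = 1 then (z : ℤ) = (S.p : ℤ) + 1 - S.i' 1 - m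
  else ∃ j : ℕ, (∀ j', j' < j → ¬ S.selA k m j' ∧ ¬ S.selB k m j') ∧
    ((S.selB k m j ∧ z = S.t (S.kseq k j)) ∨
     (S.selA k m j ∧ ¬ S.selB k m j ∧ z ≤ S.p + 1 ∧
       S.i z = S.eps (S.kseq k j) - S.i' (S.kseq k j) + S.i' k + m))


/-- The data `(i₁,ℓ₁),…,(i_p,ℓ_p); (i'₁,ℓ'₁),…,(i'_q,ℓ'_q)` (recorded as the values of
the functions `i, ℓ, i', ℓ'` on the relevant index ranges) is a *solution of system (★)*
for the parameters `(n, p, q)`. -/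
def IsStarSolution (n p q : ℕ) (i l i' l' : ℕ → ℤ) : Prop :=
  ∃ S : StarSystem, S.n = n ∧ S.p = p ∧ S.q = q ∧
    (∀ j, 1 ≤ j → j ≤ p → S.i j = i j ∧ S.l j = l j) ∧
    (∀ k, 1 ≤ k → k ≤ q → S.i' k = i' k ∧ S.l' k = l' k)

/-- For `p = n` (hence `q = 0`), system (★) has exactly one solution,
namely `i_j = n + 1 - j` and `ℓ_j = 1` for all `1 ≤ j ≤ n`; this is the solution giving
the primitive component `1 ⊗ d₍₁,₁₎⋯d₍ₙ,₁₎` of the diagonal `Δ(T_{n+2})`. -/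
theorem starSolution_p_eq_n (n : ℕ) (hn : 1 ≤ n) (i l i' l' : ℕ → ℤ) :
    IsStarSolution n n 0 i l i' l' ↔
      ∀ j, 1 ≤ j → j ≤ n → i j = (n : ℤ) + 1 - (j : ℤ) ∧ l j = 1 := by
  constructor
  · rintro ⟨S, hSn, hSp, hSq, hil, -⟩
    -- upper bound on S.i
    have hup : ∀ j : ℕ, j ≤ S.p → S.i j ≤ (S.n : ℤ) + 1 - j := by
      intro j
      induction j with
      | zero => intro _; simp [S.hi0]
      | succ j ih =>
        intro hj
        have h1 : S.i (j + 1) < S.i j := by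
          simpa using (S.hcond1 (j + 1) (by omega) hj).2
        have h2 := ih (by omega)
        push_cast
        push_cast at h2
        omega
    have hp1 : 1 ≤ S.p := by omega
    -- lower bound on S.i
    have hlow : ∀ d j : ℕ, j + d = S.p → (S.p : ℤ) + 1 - j ≤ S.i j := by
      intro d
      induction d with
      | zero =>
        intro j hj
        have h1 := (S.hcond1 S.p hp1 le_rfl).1
        have hjp : j = S.p := by omega
        subst hjp
        push_cast; omega
      | succ d ih =>
        intro j hj
        have h1 := ih (j + 1) (by omega)
        have h2 : S.i (j + 1) < S.i j := by
          simpa using (S.hcond1 (j + 1) (by omega) (by omega)).2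
        push_cast at h1 ⊢
        omega
    have hieq : ∀ j : ℕ, j ≤ S.p → S.i j = (S.n : ℤ) + 1 - j := by
      intro j hj
      have h1 := hup j hj
      have h2 := hlow (S.p - j) j (by omega)
      have : S.p = S.n := by omega
      omega
    -- L and l
    have hL : ∀ j : ℕ, j ≤ S.p → S.L j = j ∧ (1 ≤ j → S.l j = 1) := by
      intro j
      induction j with
      | zero => intro _; simp [S.hL0]
      | succ j ih =>
        intro hj
        have hLj := (ih (by omega)).1
        have hrec : S.L (j + 1) = S.L j + S.l (j + 1) := by
          simpa using S.hLrec (j + 1) (by omega) hj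
        have hc2 := S.hcond2 (j + 1) (by omega) hj
        rw [show (j + 1) - 1 = j from rfl] at hc2
        have hi1 := hieq (j + 1) hj
        have hpn : S.p = S.n := by omega
        constructor
        · push_cast at hi1 ⊢; omega
        · intro _; push_cast at hi1; omega
    intro j hj1 hj2
    have hjp : j ≤ S.p := by omega
    have h1 := (hil j hj1 (by omega)).1
    have h2 := (hil j hj1 (by omega)).2
    have h3 := hieq j hjp
    have h4 := (hL j hjp).2 hj1
    constructor
    · rw [← h1, h3, hSn]
    · rw [← h2, h4]
  · intro h
    refine ⟨{
      n := n, p := n, q := 0,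
      i := fun j => if j ≤ n then (n : ℤ) + 1 - j else 0,
      l := fun j => if 1 ≤ j ∧ j ≤ n then 1 else 0,
      i' := fun k => if k = 0 then (n : ℤ) + 1 else 0,
      l' := fun _ => 0,
      eps := fun u => if u = 0 then 0 else (n : ℤ) + 1,
      L := fun u => (u : ℤ),
      L' := fun u => if u = 0 then 0 else (n : ℤ) + 1,
      o := fun u => if u = 0 then n + 1 else 0,
      o' := fun u => if u = 0 then 1 else 0,
      t := fun _ => 0,
      hn := hn, hpq := by omega,
      hi0 := by simp,
      hip := by simp,
      hi'0 := by simp,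
      hi'q := by simp,
      heps0 := by simp,
      hepsq := by simp,
      hl0 := by simp,
      hl'0 := by simp,
      hL0 := by simp,
      hLrec := by intro u hu1 hu2; push_cast; omega,
      hLp := by push_cast; ring,
      hL'0 := by simp,
      hL'rec := by intro u hu1 hu2; omega,
      hL'q := by simp,
      hepsMono := by intro u v hu huv hv; omega,
      hepsRange := by intro u hu1 hu2; omega,
      hepsCompl := by intro u j hu1 hu2; omega,
      hcond1 := by
        intro j hj1 hj2
        simp only [hj2, if_pos, show j - 1 ≤ n from by omega, if_pos]
        constructor
        · push_cast; omega
        · push_cast; omega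
      hcond2 := by
        intro j hj1 hj2
        simp only [hj2, hj1, and_self, if_pos, show j ≤ n from hj2]
        constructor
        · norm_num
        · push_cast; omega
      hcond3 := by intro k hk1 hk2; omega,
      hcond4 := by intro k hk1 hk2; omega,
      ho := by
        intro u hu
        interval_cases u
        · refine ⟨by simp, by simp, fun r hr _ => ?_⟩
          simpa using hr
        · refine ⟨by simp, by simp, fun r hr hir => ?_⟩
          simp only [if_neg (by omega : ¬ (1:ℕ) = 0)] at hir
          by_contra hr0
          have hr1 : 1 ≤ r := by omega
          by_cases hrn : r ≤ n
          · rw [if_pos hrn] at hir; push_cast at hir; omega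
          · rw [if_neg hrn] at hir; omega
      ho' := by
        intro u hu
        by_cases hu0 : u = 0
        · subst hu0
          refine ⟨by simp, by simp, fun r hr _ => hr⟩
        · have hu1 : 1 ≤ u := by omega
          rw [if_neg hu0]
          refine ⟨by omega, ?_, fun r hr hir => ?_⟩
          · simp only [if_pos rfl]
            by_cases hun : u ≤ n
            · rw [if_pos hun]; push_cast; omega
            · rw [if_neg hun]; simp
          · by_contra hr0
            have hr1 : r = 1 := by omega
            subst hr1
            simp only [if_neg (by omega : ¬ (1:ℕ) = 0)] at hir
            by_cases hun : u ≤ n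
            · rw [if_pos hun] at hir; push_cast at hir; omega
            · rw [if_neg hun] at hir; omega
      ht := by intro u hu1 hu2; omega
    }, rfl, rfl, rfl, ?_, ?_⟩
    · intro j hj1 hj2
      obtain ⟨h1, h2⟩ := h j hj1 hj2
      constructor
      · simp only [if_pos hj2]; omega
      · simp only [if_pos (⟨hj1, hj2⟩ : 1 ≤ j ∧ j ≤ n)]; omega
    · intro k hk1 hk2; omega
end StarSystem
end

section
/- For p = 0 (and hence q = n), system (★) has exactly one solution, namely i'_k = 0 and ℓ'_k = 1 for all 1 ≤ k ≤ n; this solution gives the primitive component d_(0,1)⋯d_(0,1) ⊗ 1 of the diagonal Δ(T_{n+2}). -/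
namespace StarSystem

/-- For `p = 0` (hence `q = n`), system (★) has exactly one solution,
namely `i'_k = 0` and `ℓ'_k = 1` for all `1 ≤ k ≤ n`; this is the solution giving
the primitive component `d₍₀,₁₎⋯d₍₀,₁₎ ⊗ 1` of the diagonal `Δ(T_{n+2})`. -/
theorem starSolution_p_eq_zero (n : ℕ) (hn : 1 ≤ n) (i l i' l' : ℕ → ℤ) :
    IsStarSolution n 0 n i l i' l' ↔
      ∀ k, 1 ≤ k → k ≤ n → i' k = 0 ∧ l' k = 1 := by
  constructor
  · rintro ⟨S, hSn, hSp, hSq, -, hmatch⟩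
    subst hSn
    have hn' := S.hn
    have key : ∀ u, 1 ≤ u → ∀ v, u ≤ v → v ≤ S.n →
        S.eps u + ((v - u : ℕ) : ℤ) ≤ S.eps v := by
      intro u hu v huv
      induction v, huv using Nat.le_induction with
      | base => intro _; simp
      | succ v hv ih =>
        intro hvn
        have h1 := ih (by omega)
        have h3 := S.hepsMono v (v + 1) (by omega) (by omega) (by omega)
        omega
    have hek : ∀ k, 1 ≤ k → k ≤ S.n → S.eps k = (k : ℤ) := by
      intro k h1 h2
      have hlo := key 1 le_rfl k h1 h2
      have hhi := key k h1 S.n h2 le_rfl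
      have r1 := S.hepsRange 1 le_rfl (by omega)
      have rn := S.hepsRange S.n (by omega) (by omega)
      omega
    have main : ∀ k, k ≤ S.n → S.L' k = (k : ℤ) ∧ (1 ≤ k → S.i' k = 0 ∧ S.l' k = 1) := by
      intro k
      induction k with
      | zero => intro _; exact ⟨S.hL'0, by omega⟩
      | succ k ih =>
        intro hk
        have hLk := (ih (by omega)).1
        have hrec := S.hL'rec (k + 1) (by omega) (by omega)
        obtain ⟨h4a, h4b⟩ := S.hcond4 (k + 1) (by omega) (by omega)
        have h3 := (S.hcond3 (k + 1) (by omega) (by omega)).1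
        have he := hek (k + 1) (by omega) hk
        simp only [Nat.add_sub_cancel] at hrec h4a
        refine ⟨by omega, fun _ => ⟨by omega, by omega⟩⟩
    intro k h1 h2
    obtain ⟨hi, hl⟩ := hmatch k h1 (by omega)
    obtain ⟨hiz, hlz⟩ := (main k h2).2 h1
    exact ⟨by rw [← hi]; exact hiz, by rw [← hl]; exact hlz⟩
  · intro h
    refine ⟨{
      n := n, p := 0, q := n,
      i := fun j => if j = 0 then (n : ℤ) + 1 else 0,
      l := fun _ => 0,
      i' := fun k => if k = 0 then (n : ℤ) + 1 else 0,
      l' := fun k => if k = 0 then 0 else 1,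
      eps := fun k => min (k : ℤ) ((n : ℤ) + 1),
      L := fun u => if u = 0 then 0 else (n : ℤ) + 1,
      L' := fun u => min (u : ℤ) ((n : ℤ) + 1),
      o := fun u => if u = 0 then 1 else 0,
      o' := fun u => if u = 0 then n + 1 else 0,
      t := fun _ => 1,
      hn := hn, hpq := by omega,
      hi0 := by simp, hip := by simp,
      hi'0 := by simp, hi'q := by simp,
      heps0 := by beta_reduce; omega, hepsq := by beta_reduce; omega,
      hl0 := rfl, hl'0 := by simp,
      hL0 := by simp,
      hLrec := by intro u h1 h2; omega,
      hLp := by simp,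
      hL'0 := by beta_reduce; omega,
      hL'rec := by
        intro u h1 h2
        have hu : u ≠ 0 := by omega
        simp only [hu, if_false]
        omega,
      hL'q := by beta_reduce; omega,
      hepsMono := by intro u v h1 h2 h3; beta_reduce; omega,
      hepsRange := by intro u h1 h2; beta_reduce; omega,
      hepsCompl := by intro u j _ _ h3 h4; omega,
      hcond1 := by intro j h1 h2; omega,
      hcond2 := by intro j h1 h2; omega,
      hcond3 := by
        intro k h1 h2
        have hk : k ≠ 0 := by omega
        refine ⟨by simp [hk], ?_⟩
        intro r hr1 hr2
        have hr : r ≠ 0 := by simp at hr1; omega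
        simp [hk, hr],
      hcond4 := by
        intro k h1 h2
        have hk : k ≠ 0 := by omega
        simp only [hk, if_false]
        constructor
        · have : ((k - 1 : ℕ) : ℤ) = (k : ℤ) - 1 := by omega
          rw [this]
          omega
        · norm_num,
      ho := by
        intro u hu
        by_cases h0 : u = 0
        · subst h0
          refine ⟨by norm_num, by norm_num, fun r hr _ => ?_⟩
          beta_reduce
          simp only [reduceIte]
          omega
        · refine ⟨?_, ?_, ?_⟩
          · simp [h0]
          · beta_reduce
            simp only [h0, if_false]
            norm_num
          · intro r hr hle
            beta_reduce at hle
            by_contra hc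
            have hr1 : r = 1 := by simp only [h0, if_false] at hc ⊢; omega
            subst hr1
            simp only [one_ne_zero, if_false] at hle
            omega,
      ho' := by
        intro u hu
        by_cases h0 : u = 0
        · subst h0
          refine ⟨le_rfl, ?_, fun r hr _ => hr⟩
          beta_reduce
          norm_num
        · have hu1 : u = 1 := by omega
          subst hu1
          refine ⟨?_, ?_, ?_⟩
          · simp
          · beta_reduce
            norm_num
          · intro r hr hle
            beta_reduce at hle ⊢
            have hr0 : r = 0 := by
              by_contra hc
              simp [hc] at hle
              omega
            simp [hr0],
      ht := by
        intro u h1 h2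
        have hu : u ≠ 0 := by omega
        refine ⟨by beta_reduce; omega, ⟨?_, ?_⟩, ?_⟩
        · beta_reduce
          simp only [if_neg hu, reduceIte]
          omega
        · beta_reduce
          rw [if_neg one_ne_zero]
          omega
        · intro r hr
          have hr0 : r = 0 := by beta_reduce at hr; omega
          subst hr0
          beta_reduce
          simp only [if_neg hu, reduceIte]
          rintro ⟨-, hbad⟩
          omega
    }, rfl, rfl, rfl, ?_, ?_⟩
    · intro j h1 h2; omega
    · intro k h1 h2
      obtain ⟨hik, hlk⟩ := h k h1 h2
      have hk : k ≠ 0 := by omega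
      simp only [hk, if_false]
      exact ⟨hik.symm, hlk.symm⟩
end StarSystem
end

section
/- For all n ≥ 0 and all 0 ≤ k ≤ n, there is a bijection between the set of type I sequences of length n−k for n+2 indeterminants and the set of planar rooted trees having n+2 leaves and exactly n−k+1 internal nodes. -/
/-- A planar rooted tree: either a leaf, or an internal node carrying an ordered list
of subtrees.  (Well-formedness — every internal node has at least two children — is
the separate predicate `PRT.WF`.) -/
inductive PRT : Type where
  | leaf : PRT
  | node : List PRT → PRT

namespace PRT

/-- The number of leaves of a planar rooted tree. -/
def leaves : PRT → ℕ
  | .leaf => 1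
  | .node ts => (ts.attach.map (fun t => leaves t.1)).sum
decreasing_by
  have := List.sizeOf_lt_of_mem t.2
  simp only [PRT.node.sizeOf_spec]
  omega

/-- The number of internal nodes of a planar rooted tree. -/
def nodes : PRT → ℕ
  | .leaf => 0
  | .node ts => 1 + (ts.attach.map (fun t => nodes t.1)).sum
decreasing_by
  have := List.sizeOf_lt_of_mem t.2
  simp only [PRT.node.sizeOf_spec]
  omega

/-- A planar rooted tree is well formed when every internal node carries at least two
subtrees. -/
inductive WF : PRT → Prop where
  | leaf : WF .leaf
  | node (ts : List PRT) (h2 : 2 ≤ ts.length) (h : ∀ t ∈ ts, WF t) : WF (.node ts)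

/-- A planar binary rooted tree: every internal node has exactly two children. -/
inductive Binary : PRT → Prop where
  | leaf : Binary .leaf
  | node (a b : PRT) : Binary a → Binary b → Binary (.node [a, b])

end PRT

/-- `AdmissibleFrom nr s`: the sequence `s` of pairs `(i, ℓ)` is admissible when the
current number of "free" slots is `nr` (i.e. the first operator acts on `nr + 2`
indeterminants): either `i = 0` and `1 ≤ ℓ ≤ nr`, or `1 ≤ i ≤ nr` and
`1 ≤ ℓ ≤ nr + 1 - i`; afterwards `nr` drops by `ℓ`. -/
def AdmissibleFrom : ℕ → List (ℕ × ℕ) → Prop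
  | _, [] => True
  | nr, (i, l) :: rest =>
      ((i = 0 ∧ 1 ≤ l ∧ l ≤ nr) ∨ (1 ≤ i ∧ i ≤ nr ∧ 1 ≤ l ∧ l ≤ nr + 1 - i)) ∧
      AdmissibleFrom (nr - l) rest

/-- A type I sequence for `n + 2` indeterminants: an admissible sequence whose first
indices are weakly decreasing. -/
def TypeISeq (n : ℕ) (s : List (ℕ × ℕ)) : Prop :=
  AdmissibleFrom n s ∧ s.Chain' (fun a b => b.1 ≤ a.1)


/-!
Read from right to left, a type I sequence builds a planar tree out of a corolla: the operator
`(i, ℓ)` grafts a corolla with `ℓ + 1` leaves onto leaf `i`. Record every non-root internal node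
of a tree as the pair (index of its leftmost leaf, number of its children minus one), listed in
preorder; the first entries of this list increase weakly. A graft at a leaf lying weakly to the
right of the leftmost leaf of every internal node appends the new node at the end of the list.
Since the first indices of a type I sequence decrease weakly, all its grafts are of this kind,
so the sequence is the reversed list of the tree it builds. Conversely, the last node of the
list has only leaves as children; contracting it undoes the last graft, and induction on the
number of nodes shows that every reversed list is a type I sequence that rebuilds its tree.
-/

theorem List.eq_of_cons_append_eq_append_singleton {α : Type*} {a y : α} {A B L : List α}
    (h : a :: (A ++ B) = L ++ [y]) :
    (A = [] ∧ B = [] ∧ L = [] ∧ a = y) ∨ (∃ A', A = A' ++ [y] ∧ B = [] ∧ L = a :: A') ∨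
      ∃ B', B = B' ++ [y] ∧ L = a :: (A ++ B') := by
  rcases B.eq_nil_or_concat with rfl | ⟨B, b, rfl⟩
  · rcases A.eq_nil_or_concat with rfl | ⟨A, b, rfl⟩
    · obtain ⟨rfl, rfl⟩ := List.append_singleton_inj.1 (show [] ++ [a] = L ++ [y] from h)
      simp
    · obtain ⟨rfl, rfl⟩ :=
        List.append_singleton_inj.1 (show (a :: A) ++ [b] = L ++ [y] by simpa using h)
      simp
  · obtain ⟨rfl, rfl⟩ :=
      List.append_singleton_inj.1 (show (a :: (A ++ B)) ++ [b] = L ++ [y] by simpa using h)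
    simp

namespace PRT

@[simp] lemma leaves_leaf : leaves leaf = 1 := by simp [leaves]

@[simp] lemma leaves_node_nil : leaves (node []) = 0 := by simp [leaves]

@[simp] lemma leaves_node_cons (t : PRT) (ts : List PRT) :
    leaves (node (t :: ts)) = leaves t + leaves (node ts) := by
  simp [leaves]

@[simp] lemma nodes_leaf : nodes leaf = 0 := by simp [nodes]

@[simp] lemma nodes_node_nil : nodes (node []) = 1 := by simp [nodes]

@[simp] lemma nodes_node_cons (t : PRT) (ts : List PRT) :
    nodes (node (t :: ts)) = nodes t + nodes (node ts) := by
  simp [nodes]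
  omega

@[simp] lemma wf_node_iff {ts : List PRT} :
    WF (node ts) ↔ 2 ≤ ts.length ∧ ∀ t ∈ ts, WF t :=
  ⟨fun | .node _ h2 h => ⟨h2, h⟩, fun ⟨h2, h⟩ => .node ts h2 h⟩

lemma WF.one_le_leaves {t : PRT} (ht : WF t) : 1 ≤ leaves t := by
  induction ht with
  | leaf => simp
  | node ts h2 _ ih =>
    obtain ⟨t, ts, rfl⟩ := List.exists_cons_of_length_pos (by omega : 0 < ts.length)
    have := ih t (by simp)
    simp
    omega

lemma length_le_leaves_node {ts : List PRT} (hts : ∀ t ∈ ts, WF t) :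
    ts.length ≤ leaves (node ts) := by
  induction ts with
  | nil => simp
  | cons t ts ih =>
    rw [List.forall_mem_cons] at hts
    have := hts.1.one_le_leaves
    have := ih hts.2
    simp
    omega

def children : PRT → List PRT
  | leaf => []
  | node ts => ts

lemma eq_node_children {t : PRT} (ht : nodes t ≠ 0) : t = node t.children := by
  cases t <;> simp_all [children]

def corolla (m : ℕ) : PRT := node (List.replicate m leaf)

@[simp] lemma leaves_corolla (m : ℕ) : leaves (corolla m) = m := by
  induction m with
  | zero => simp [corolla]
  | succ m ih =>
    simp_all [corolla, List.replicate_succ]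
    omega

lemma wf_corolla {m : ℕ} (hm : 2 ≤ m) : WF (corolla m) :=
  wf_node_iff.2 ⟨by simpa using hm, by simp [WF.leaf]⟩

def replaceLeaf (c : PRT) : List PRT → ℕ → List PRT
  | [], _ => []
  | leaf :: ts, 0 => c :: ts
  | leaf :: ts, j + 1 => leaf :: replaceLeaf c ts j
  | node us :: ts, j =>
    if j < (node us).leaves then node (replaceLeaf c us j) :: ts
    else node us :: replaceLeaf c ts (j - (node us).leaves)

lemma length_replaceLeaf (c : PRT) (ts : List PRT) (j : ℕ) :
    (replaceLeaf c ts j).length = ts.length := by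
  fun_induction replaceLeaf c ts j <;> simp_all

lemma leaves_node_replaceLeaf (c : PRT) {ts : List PRT} {j : ℕ} (hj : j < leaves (node ts)) :
    leaves (node (replaceLeaf c ts j)) + 1 = leaves (node ts) + leaves c := by
  fun_induction replaceLeaf c ts j <;> simp_all <;> omega

lemma wf_replaceLeaf {c : PRT} (hc : WF c) {ts : List PRT} (hts : ∀ t ∈ ts, WF t) (j : ℕ) :
    ∀ t ∈ replaceLeaf c ts j, WF t := by
  fun_induction replaceLeaf c ts j <;> simp_all [length_replaceLeaf, WF.leaf]

/-- The non-root internal nodes of the tree `node ts` in preorder, each as the pair (index of its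
leftmost leaf, number of its children minus one), where the leaves are numbered from `off`
on. -/
def preorder : ℕ → List PRT → List (ℕ × ℕ)
  | _, [] => []
  | off, leaf :: ts => preorder (off + 1) ts
  | off, node us :: ts =>
    (off, us.length - 1) :: (preorder off us ++ preorder (off + (node us).leaves) ts)

lemma preorder_eq_nil_iff {off : ℕ} {ts : List PRT} :
    preorder off ts = [] ↔ ∀ t ∈ ts, t = leaf := by
  fun_induction preorder off ts <;> simp_all

lemma preorder_eq_nil_of_eq_nil {off : ℕ} {ts : List PRT} (h : preorder off ts = [])
    (off' : ℕ) : preorder off' ts = [] :=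
  preorder_eq_nil_iff.2 (preorder_eq_nil_iff.1 h)

lemma eq_replicate_of_preorder_eq_nil {off : ℕ} {ts : List PRT} (h : preorder off ts = []) :
    ts = List.replicate ts.length leaf :=
  List.eq_replicate_iff.2 ⟨rfl, preorder_eq_nil_iff.1 h⟩

lemma le_fst_of_mem_preorder {off : ℕ} {ts : List PRT} {x : ℕ × ℕ}
    (hx : x ∈ preorder off ts) : off ≤ x.1 := by
  fun_induction preorder off ts with
  | case1 => simp at hx
  | case2 off ts ih =>
    have := ih hx
    omega
  | case3 off us ts ihus ihts =>
    simp only [List.mem_cons, List.mem_append] at hx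
    rcases hx with rfl | hx | hx
    · rfl
    · exact ihus hx
    · have := ihts hx
      omega

lemma fst_le_of_mem_preorder {off : ℕ} {ts : List PRT} {x : ℕ × ℕ}
    (hx : x ∈ preorder off ts) : x.1 ≤ off + leaves (node ts) := by
  fun_induction preorder off ts with
  | case1 => simp at hx
  | case2 off ts ih =>
    have := ih hx
    simp
    omega
  | case3 off us ts ihus ihts =>
    simp only [List.mem_cons, List.mem_append] at hx
    rcases hx with rfl | hx | hx
    · simp
    · have := ihus hx
      simp
      omega
    · have := ihts hx
      simp at this ⊢
      omega

lemma preorder_eq_nil_of_forall_fst_lt {off : ℕ} {ts : List PRT}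
    (h : ∀ x ∈ preorder off ts, x.1 < off) : preorder off ts = [] :=
  List.eq_nil_iff_forall_not_mem.2 fun x hx => (h x hx).not_ge (le_fst_of_mem_preorder hx)

lemma pairwise_preorder (off : ℕ) (ts : List PRT) :
    (preorder off ts).Pairwise (fun a b => a.1 ≤ b.1) := by
  fun_induction preorder off ts with
  | case1 => simp
  | case2 => assumption
  | case3 off us ts ihus ihts =>
    simp only [List.pairwise_cons, List.pairwise_append, List.mem_append]
    refine ⟨?_, ihus, ihts, fun x hx y hy => ?_⟩
    · rintro x (hx | hx) <;> have := le_fst_of_mem_preorder hx <;> omega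
    · exact (fst_le_of_mem_preorder hx).trans (by simpa using le_fst_of_mem_preorder hy)

lemma length_preorder (off : ℕ) (ts : List PRT) :
    (preorder off ts).length + 1 = nodes (node ts) := by
  fun_induction preorder off ts <;> simp_all
  omega

lemma preorder_replaceLeaf_corolla {l off j : ℕ} {ts : List PRT} (hj : j < leaves (node ts))
    (hle : ∀ x ∈ preorder off ts, x.1 ≤ off + j) :
    preorder off (replaceLeaf (corolla (l + 1)) ts j) = preorder off ts ++ [(off + j, l)] := by
  -- `hle` rules out internal nodes to the right of leaf `j`, so the new node comes last
  fun_induction replaceLeaf (corolla (l + 1)) ts j generalizing off with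
  | case1 => simp at hj
  | case2 ts =>
    simp only [preorder] at hle
    have hts : preorder (off + 1) ts = [] :=
      preorder_eq_nil_of_forall_fst_lt fun x hx => by have := hle x hx; omega
    simp [preorder, corolla, hts, preorder_eq_nil_of_eq_nil hts, preorder_eq_nil_iff]
  | case3 ts j ih =>
    simp only [preorder] at hle ⊢
    rw [ih (by simp at hj; omega) (fun x hx => by have := hle x hx; omega), Nat.add_right_comm]
    rfl
  | case4 us ts j hjus ih =>
    simp only [preorder, List.mem_cons, List.mem_append] at hle ⊢
    have hts : preorder (off + (node us).leaves) ts = [] :=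
      preorder_eq_nil_of_forall_fst_lt fun x hx => by have := hle x (.inr (.inr hx)); simp; omega
    rw [ih hjus fun x hx => hle x (.inr (.inl hx)), length_replaceLeaf, hts,
      preorder_eq_nil_of_eq_nil hts]
    simp
  | case5 us ts j hjus ih =>
    simp only [preorder, List.mem_cons, List.mem_append] at hle ⊢
    have hjts : j - (node us).leaves < (node ts).leaves := by simp at hj; omega
    rw [ih hjts fun x hx => by have := hle x (.inr (.inr hx)); omega]
    simp only [List.cons_append, List.append_assoc]
    congr 5
    omega

lemma exists_replaceLeaf_corolla_eq {off j l : ℕ} {ts : List PRT} {L : List (ℕ × ℕ)}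
    (hts : ∀ t ∈ ts, WF t) (h : preorder off ts = L ++ [(off + j, l)]) :
    ∃ ts', (∀ t ∈ ts', WF t) ∧ preorder off ts' = L ∧ j < leaves (node ts') ∧ 1 ≤ l ∧
      replaceLeaf (corolla (l + 1)) ts' j = ts := by
  fun_induction preorder off ts generalizing j L with
  | case1 => simp at h
  | case2 off ts ih =>
    have hj : off + 1 ≤ off + j :=
      le_fst_of_mem_preorder (ts := ts) (x := (off + j, l)) (by simp [h])
    obtain ⟨j, rfl⟩ : ∃ j', j = j' + 1 := ⟨j - 1, by omega⟩
    obtain ⟨ts', hwf, hpre, hj, hl, rfl⟩ :=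
      ih (fun t ht => hts t (.tail _ ht)) (by rw [h, Nat.add_right_comm, Nat.add_assoc])
    exact ⟨leaf :: ts', by simpa [WF.leaf] using hwf, by simpa [preorder] using hpre,
      by simp; omega, hl, by simp [replaceLeaf]⟩
  | case3 off us ts ihus ihts =>
    rw [List.forall_mem_cons, wf_node_iff] at hts
    obtain ⟨⟨hlen, hus⟩, hts⟩ := hts
    -- the last node is `node us` itself, or lies inside `us`, or lies inside `ts`
    rcases List.eq_of_cons_append_eq_append_singleton h with
      ⟨hnil', hnil, rfl, hx⟩ | ⟨L₁, hy, hnil, rfl⟩ | ⟨L₂, hx, rfl⟩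
    · obtain ⟨rfl, rfl⟩ : j = 0 ∧ us.length - 1 = l := by simpa using hx
      have hus : corolla (us.length - 1 + 1) = node us := by
        rw [Nat.sub_add_cancel (by omega), corolla, ← eq_replicate_of_preorder_eq_nil hnil']
      refine ⟨leaf :: ts, by simpa [WF.leaf] using hts, ?_, by simp, by omega, ?_⟩
      · simpa [preorder] using preorder_eq_nil_of_eq_nil hnil _
      · simp [replaceLeaf, hus]
    · obtain ⟨us', hwf, hpre, hj, hl, rfl⟩ := ihus hus hy
      rw [length_replaceLeaf] at hlen
      refine ⟨node us' :: ts, by simpa [hlen] using ⟨hwf, hts⟩, ?_, by simp; omega, hl,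
        by simp [replaceLeaf, hj]⟩
      simp [preorder, hpre, preorder_eq_nil_of_eq_nil hnil, length_replaceLeaf]
    · have hj : off + (node us).leaves ≤ off + j :=
        le_fst_of_mem_preorder (ts := ts) (x := (off + j, l)) (by simp [hx])
      obtain ⟨ts', hwf, hpre, hj', hl, rfl⟩ :=
        ihts hts (j := j - (node us).leaves) (L := L₂) (by rw [hx]; congr 3; omega)
      refine ⟨node us :: ts', by simpa [hlen] using ⟨hus, hwf⟩, by simp [preorder, hpre],
        by simp at hj ⊢; omega, hl, ?_⟩
      simp [replaceLeaf, not_lt.2 (Nat.le_of_add_le_add_left hj)]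

end PRT

open PRT

lemma admissibleFrom_cons_iff {n i l : ℕ} {s : List (ℕ × ℕ)} :
    AdmissibleFrom n ((i, l) :: s) ↔
      (1 ≤ l ∧ l ≤ n ∧ i + l ≤ n + 1) ∧ AdmissibleFrom (n - l) s := by
  rw [AdmissibleFrom]
  exact and_congr_left' (by omega)

lemma typeISeq_iff {n : ℕ} {s : List (ℕ × ℕ)} :
    TypeISeq n s ↔ AdmissibleFrom n s ∧ s.Pairwise (fun a b => b.1 ≤ a.1) :=
  and_congr_right' (@List.isChain_iff_pairwise _ _ _ ⟨fun h₁ h₂ => h₂.trans h₁⟩)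

def forestOfSeq : ℕ → List (ℕ × ℕ) → List PRT
  | n, [] => List.replicate (n + 2) leaf
  | n, (i, l) :: s => replaceLeaf (corolla (l + 1)) (forestOfSeq (n - l) s) i

def PRT.toSeq (t : PRT) : List (ℕ × ℕ) := (preorder 0 t.children).reverse

lemma wf_node_forestOfSeq {n : ℕ} {s : List (ℕ × ℕ)} (hs : AdmissibleFrom n s) :
    WF (node (forestOfSeq n s)) := by
  induction s generalizing n with
  | nil => exact wf_corolla (by omega)
  | cons x s ih =>
    obtain ⟨⟨hl, -, -⟩, hs⟩ := admissibleFrom_cons_iff.1 hs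
    obtain ⟨hlen, hwf⟩ := wf_node_iff.1 (ih hs)
    exact wf_node_iff.2 ⟨by rwa [forestOfSeq, length_replaceLeaf],
      wf_replaceLeaf (wf_corolla (by omega)) hwf _⟩

lemma leaves_node_forestOfSeq {n : ℕ} {s : List (ℕ × ℕ)} (hs : AdmissibleFrom n s) :
    leaves (node (forestOfSeq n s)) = n + 2 := by
  induction s generalizing n with
  | nil => exact leaves_corolla (n + 2)
  | cons x s ih =>
    obtain ⟨⟨hl, hln, hil⟩, hs⟩ := admissibleFrom_cons_iff.1 hs
    have := leaves_node_replaceLeaf (corolla (x.2 + 1)) (j := x.1) (by rw [ih hs]; omega)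
    rw [ih hs, leaves_corolla] at this
    rw [forestOfSeq]
    omega

lemma preorder_forestOfSeq {n : ℕ} {s : List (ℕ × ℕ)} (hs : TypeISeq n s) :
    preorder 0 (forestOfSeq n s) = s.reverse := by
  rw [typeISeq_iff] at hs
  induction s generalizing n with
  | nil => simp [forestOfSeq, preorder_eq_nil_iff]
  | cons x s ih =>
    obtain ⟨i, l⟩ := x
    obtain ⟨⟨⟨-, -, hil⟩, hadm⟩, hx, hpair⟩ :=
      And.imp admissibleFrom_cons_iff.1 List.pairwise_cons.1 hs
    have hs := ih ⟨hadm, hpair⟩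
    rw [forestOfSeq, preorder_replaceLeaf_corolla (by rw [leaves_node_forestOfSeq hadm]; omega)
      (by simpa [hs] using hx), hs]
    simp

lemma toSeq_node_forestOfSeq {n : ℕ} {s : List (ℕ × ℕ)} (hs : TypeISeq n s) :
    toSeq (node (forestOfSeq n s)) = s := by
  rw [toSeq, children, preorder_forestOfSeq hs, List.reverse_reverse]

lemma nodes_node_forestOfSeq {n : ℕ} {s : List (ℕ × ℕ)} (hs : TypeISeq n s) :
    nodes (node (forestOfSeq n s)) = s.length + 1 := by
  rw [← length_preorder 0, preorder_forestOfSeq hs, List.length_reverse]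

lemma forestOfSeq_reverse_preorder {n : ℕ} {ts : List PRT} (hts : ∀ t ∈ ts, WF t)
    (hlen : 2 ≤ ts.length) (hleaves : leaves (node ts) = n + 2) :
    AdmissibleFrom n (preorder 0 ts).reverse ∧ forestOfSeq n (preorder 0 ts).reverse = ts := by
  generalize hL : preorder 0 ts = L
  induction L using List.reverseRecOn generalizing n ts with
  | nil =>
    have hrep := eq_replicate_of_preorder_eq_nil hL
    rw [hrep, ← corolla, leaves_corolla] at hleaves
    exact ⟨trivial, by rw [List.reverse_nil, forestOfSeq, ← hleaves, ← hrep]⟩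
  | append_singleton L x ih =>
    obtain ⟨p, l⟩ := x
    obtain ⟨ts', hwf, hpre, hp, hl, rfl⟩ :=
      exists_replaceLeaf_corolla_eq (off := 0) hts (by rw [hL, Nat.zero_add])
    rw [length_replaceLeaf] at hlen
    have hleaves' := leaves_node_replaceLeaf (corolla (l + 1)) hp
    have := length_le_leaves_node hwf
    rw [leaves_corolla, hleaves] at hleaves'
    obtain ⟨hadm, hforest⟩ := ih hwf hlen (n := n - l) (by omega) hpre
    rw [List.reverse_append, List.reverse_singleton, List.singleton_append, forestOfSeq, hforest,
      admissibleFrom_cons_iff]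
    exact ⟨⟨⟨hl, by omega, by omega⟩, hadm⟩, rfl⟩

lemma typeISeq_toSeq {n : ℕ} {t : PRT} (hwf : WF t) (hleaves : leaves t = n + 2)
    (hnodes : nodes t ≠ 0) : TypeISeq n (toSeq t) := by
  rw [eq_node_children hnodes, wf_node_iff] at hwf
  rw [eq_node_children hnodes] at hleaves
  exact typeISeq_iff.2 ⟨(forestOfSeq_reverse_preorder hwf.2 hwf.1 hleaves).1,
    List.pairwise_reverse.2 (pairwise_preorder 0 _)⟩

lemma node_forestOfSeq_toSeq {n : ℕ} {t : PRT} (hwf : WF t) (hleaves : leaves t = n + 2)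
    (hnodes : nodes t ≠ 0) : node (forestOfSeq n (toSeq t)) = t := by
  rw [eq_node_children hnodes, wf_node_iff] at hwf
  rw [eq_node_children hnodes] at hleaves
  rw [toSeq, (forestOfSeq_reverse_preorder hwf.2 hwf.1 hleaves).2, ← eq_node_children hnodes]

lemma length_toSeq {t : PRT} (hnodes : nodes t ≠ 0) : (toSeq t).length + 1 = nodes t := by
  rw [toSeq, List.length_reverse, length_preorder, ← eq_node_children hnodes]

def typeISeqEquivPRT (n m : ℕ) :
    {s : List (ℕ × ℕ) // s.length = m ∧ TypeISeq n s} ≃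
      {t : PRT // t.WF ∧ t.leaves = n + 2 ∧ t.nodes = m + 1} where
  toFun s := ⟨node (forestOfSeq n s.1), wf_node_forestOfSeq s.2.2.1,
    leaves_node_forestOfSeq s.2.2.1, by rw [nodes_node_forestOfSeq s.2.2, s.2.1]⟩
  invFun t := ⟨toSeq t.1, by have := length_toSeq (t := t.1) (by omega); omega,
    typeISeq_toSeq t.2.1 t.2.2.1 (by omega)⟩
  left_inv s := Subtype.ext (toSeq_node_forestOfSeq s.2.2)
  right_inv t := Subtype.ext (node_forestOfSeq_toSeq t.2.1 t.2.2.1 (by omega))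

theorem typeISeq_equiv_PRT_general (n k : ℕ) :
    Nonempty ({s : List (ℕ × ℕ) // s.length = n - k ∧ TypeISeq n s} ≃
      {t : PRT // t.WF ∧ t.leaves = n + 2 ∧ t.nodes = n - k + 1}) :=
  ⟨typeISeqEquivPRT n (n - k)⟩

/-- For all `n ≥ 0` and all `0 ≤ k ≤ n`, there is a bijection between
the set of type I sequences of length `n - k` for `n + 2` indeterminants and the set of
planar rooted trees having `n + 2` leaves and exactly `n - k + 1` internal nodes. -/
theorem typeISeq_equiv_PRT (n k : ℕ) (hk : k ≤ n) :
    Nonempty ({s : List (ℕ × ℕ) // s.length = n - k ∧ TypeISeq n s} ≃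
      {t : PRT // t.WF ∧ t.leaves = n + 2 ∧ t.nodes = n - k + 1}) :=
  typeISeq_equiv_PRT_general n k
end
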